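/- arXiv:2202.08451 — 2 statements merged into one kernel-verified Lean document; each statement's English description precedes it below -/
import Mathlib

section
/- Let G be a finite group, p a prime, and P an abelian Sylow p-subgroup of G. If two elements x, y of P are conjugate in G, then they are conjugate in the normalizer N_G(P). -/
/-- Burnside's fusion lemma (1897): if `P` is an abelian Sylow `p`-subgroup of a
finite group `G`, then two elements of `P` that are conjugate in `G` are already
conjugate in the normalizer `N_G(P)`. -/
theorem burnside_fusion {G : Type*} [Group G] [Fintype G] (p : ℕ) [Fact p.Prime]
    (P : Sylow p G) (hab : IsMulCommutative (P : Subgroup G))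
    (x y : G) (hx : x ∈ (P : Subgroup G)) (hy : y ∈ (P : Subgroup G))
    (h : ∃ g : G, g * x * g⁻¹ = y) :
    ∃ n ∈ Subgroup.normalizer ((P : Subgroup G) : Set G), n * x * n⁻¹ = y := by
  obtain ⟨g, rfl⟩ := h
  have : IsMulCommutative (P : Subgroup G) := hab
  obtain ⟨n, hn, hconj⟩ := P.conj_eq_normalizer_conj_of_mem x g⁻¹ hx (by rwa [inv_inv])
  exact ⟨n⁻¹, inv_mem hn, by simpa using hconj.symm⟩
end

section
/- Let G be a finite group, p a prime, and U a Sylow p-subgroup of G satisfying the trivial intersection property: for every g ∈ G not in N_G(U), one has U ∩ gUg^{-1} = 1. Then any two subgroups Q, Q' of U that are conjugate in G and non-trivial are already conjugate by an element of N_G(U). -/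
/-! The conjugating element `g` itself lies in `N_G(U)`: `gQg⁻¹ = Q'` is a non-trivial
subgroup of `U ∩ gUg⁻¹`, which the trivial intersection property rules out for `g ∉ N_G(U)`. -/

namespace Subgroup

variable {G : Type*} [Group G]

theorem mem_normalizer_of_map_conj_le_of_inf_map_conj_eq_bot {H Q : Subgroup G}
    (hTI : ∀ g : G, g ∉ normalizer (H : Set G) → H ⊓ map (MulAut.conj g).toMonoidHom H = ⊥)
    (hQ : Q ≤ H) (hQbot : Q ≠ ⊥) {g : G} (hg : map (MulAut.conj g).toMonoidHom Q ≤ H) :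
    g ∈ normalizer (H : Set G) := by
  by_contra hgN
  have hle : map (MulAut.conj g).toMonoidHom Q ≤ H ⊓ map (MulAut.conj g).toMonoidHom H :=
    le_inf hg (map_mono hQ)
  rw [hTI g hgN, le_bot_iff, ← map_bot (MulAut.conj g).toMonoidHom] at hle
  exact hQbot (map_injective (MulAut.conj g).injective hle)

end Subgroup

theorem ti_sylow_fusion_general {G : Type*} [Group G] (p : ℕ)
    (U : Sylow p G)
    (hTI : ∀ g : G, g ∉ Subgroup.normalizer ((U : Subgroup G) : Set G) →
      (U : Subgroup G) ⊓ Subgroup.map (MulAut.conj g).toMonoidHom (U : Subgroup G) = ⊥)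
    (Q Q' : Subgroup G) (hQ : Q ≤ (U : Subgroup G)) (hQ' : Q' ≤ (U : Subgroup G))
    (hQbot : Q ≠ ⊥) (g : G)
    (hconj : Subgroup.map (MulAut.conj g).toMonoidHom Q = Q') :
    ∃ n ∈ Subgroup.normalizer ((U : Subgroup G) : Set G),
      Subgroup.map (MulAut.conj n).toMonoidHom Q = Q' :=
  ⟨g, Subgroup.mem_normalizer_of_map_conj_le_of_inf_map_conj_eq_bot hTI hQ hQbot (hconj ▸ hQ'),
    hconj⟩

/-- If a Sylow `p`-subgroup `U` of a finite group `G` has the trivial intersection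
property (distinct conjugates of `U` meet trivially), then any two non-trivial
subgroups of `U` that are conjugate in `G` are already conjugate by an element of
the normalizer `N_G(U)`. -/
theorem ti_sylow_fusion {G : Type*} [Group G] [Fintype G] (p : ℕ) [Fact p.Prime]
    (U : Sylow p G)
    (hTI : ∀ g : G, g ∉ Subgroup.normalizer ((U : Subgroup G) : Set G) →
      (U : Subgroup G) ⊓ Subgroup.map (MulAut.conj g).toMonoidHom (U : Subgroup G) = ⊥)
    (Q Q' : Subgroup G) (hQ : Q ≤ (U : Subgroup G)) (hQ' : Q' ≤ (U : Subgroup G))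
    (hQbot : Q ≠ ⊥) (g : G)
    (hconj : Subgroup.map (MulAut.conj g).toMonoidHom Q = Q') :
    ∃ n ∈ Subgroup.normalizer ((U : Subgroup G) : Set G),
      Subgroup.map (MulAut.conj n).toMonoidHom Q = Q' :=
  ti_sylow_fusion_general p U hTI Q Q' hQ hQ' hQbot g hconj
end
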